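/- The degenerate Fubini numbers satisfy, for all n ≥ 1: ∑_{k=0}^{n} C(n,k) (1-λ)_{n-k,λ} F_{k,λ} = 2 ∑_{k=0}^{n} C(n,k) (-1)^{n-k} ⟨λ⟩_{n-k,λ} F_{k,λ} + (-1)^{n-1} ⟨λ⟩_{n,λ}. -/

import Mathlib

open Finset

/-- Generalized falling factorial `(x)_{n,lam} = x(x-lam)...(x-(n-1)lam)`. -/
noncomputable def dfall (lam x : ℝ) (n : ℕ) : ℝ := ∏ i ∈ Finset.range n, (x - i * lam)

/-- Generalized rising factorial `⟨x⟩_{n,lam} = x(x+lam)...(x+(n-1)lam)`. -/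
noncomputable def drise (lam x : ℝ) (n : ℕ) : ℝ := ∏ i ∈ Finset.range n, (x + i * lam)

lemma dfall_zero (lam x : ℝ) : dfall lam x 0 = 1 := by simp [dfall]

lemma dfall_succ (lam x : ℝ) (n : ℕ) : dfall lam x (n+1) = dfall lam x n * (x - n * lam) :=
  Finset.prod_range_succ _ _

lemma dfall_succ' (lam x : ℝ) (n : ℕ) : dfall lam x (n+1) = dfall lam (x - lam) n * x := by
  unfold dfall
  rw [Finset.prod_range_succ']
  congr 1
  · apply Finset.prod_congr rfl; intro i _; push_cast; ring
  · simp

lemma dfall_one_shift (lam : ℝ) (m : ℕ) : dfall lam (1 - lam) m = dfall lam 1 (m+1) := by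
  rw [dfall_succ', mul_one]

lemma dfall_zero_x (lam : ℝ) (n : ℕ) : dfall lam 0 (n+1) = 0 := by
  rw [dfall_succ', mul_zero]

lemma drise_eq (lam : ℝ) (m : ℕ) : drise lam lam m = lam ^ m * (m.factorial : ℝ) := by
  induction m with
  | zero => simp [drise]
  | succ k ih =>
      rw [drise, Finset.prod_range_succ, ← drise, ih]
      push_cast [Nat.factorial_succ]
      ring

lemma dfall_shift_one (x : ℝ) (r : ℕ) :
    dfall 1 (x + 1) r = dfall 1 x r + r * dfall 1 x (r - 1) := by
  cases r with
  | zero => simp [dfall]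
  | succ s =>
      rw [dfall_succ' 1 (x+1) s, dfall_succ 1 x s]
      simp only [Nat.succ_sub_one]
      push_cast
      have : x + 1 - 1 = x := by ring
      rw [this]
      ring

lemma Bval (m : ℕ) : ∀ r : ℕ,
    ∑ j ∈ range (m+1), (-1:ℝ)^(m-j) * (m.choose j : ℝ) * dfall 1 (j:ℝ) r
      = if r = m then (m.factorial : ℝ) else 0 := by
  induction m with
  | zero =>
      intro r
      cases r with
      | zero => simp [dfall]
      | succ s => simp [dfall_zero_x]
  | succ m ih =>
      intro r
      have key : ∑ j ∈ range (m+1+1), (-1:ℝ)^(m+1-j) * ((m+1).choose j : ℝ) * dfall 1 (j:ℝ) r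
          = ((∑ j ∈ range (m+1), (-1:ℝ)^(m-j) * (m.choose j : ℝ) * dfall 1 ((j:ℝ)+1) r)
            + (∑ j ∈ range (m+1), (-1:ℝ)^(m-j) * (m.choose (j+1) : ℝ) * dfall 1 ((j:ℝ)+1) r))
            + (-1:ℝ)^(m+1) * dfall 1 (0:ℝ) r := by
        rw [Finset.sum_range_succ']
        congr 1
        · rw [← Finset.sum_add_distrib]
          apply Finset.sum_congr rfl
          intro j hj
          have h1 : m + 1 - (j+1) = m - j := by omega
          rw [h1, Nat.choose_succ_succ]
          push_cast
          ring
        · simp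
      have hV1 : ∑ j ∈ range (m+1+1), (-1:ℝ)^(m+1-j) * (m.choose j : ℝ) * dfall 1 (j:ℝ) r
          = (∑ j ∈ range (m+1), (-1:ℝ)^(m-j) * (m.choose (j+1) : ℝ) * dfall 1 ((j:ℝ)+1) r)
            + (-1:ℝ)^(m+1) * dfall 1 (0:ℝ) r := by
        rw [Finset.sum_range_succ']
        congr 1
        · apply Finset.sum_congr rfl
          intro j hj
          have h1 : m + 1 - (j+1) = m - j := by omega
          rw [h1]; push_cast; ring
        · simp
      have hV2 : ∑ j ∈ range (m+1+1), (-1:ℝ)^(m+1-j) * (m.choose j : ℝ) * dfall 1 (j:ℝ) r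
          = -(if r = m then (m.factorial:ℝ) else 0) := by
        rw [Finset.sum_range_succ]
        have hc : (m.choose (m+1) : ℝ) = 0 := by
          simp [Nat.choose_eq_zero_of_lt]
        rw [hc]
        have hsgn : ∀ j ∈ range (m+1), (-1:ℝ)^(m+1-j) * (m.choose j:ℝ) * dfall 1 (j:ℝ) r
            = -((-1:ℝ)^(m-j) * (m.choose j:ℝ) * dfall 1 (j:ℝ) r) := by
          intro j hj
          have hj' : j < m + 1 := mem_range.mp hj
          have h1 : m + 1 - j = (m - j) + 1 := by omega
          rw [h1, pow_succ]; ring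
        rw [Finset.sum_congr rfl hsgn, Finset.sum_neg_distrib, ih r]
        simp
      have hU : ∑ j ∈ range (m+1), (-1:ℝ)^(m-j) * (m.choose (j+1) : ℝ) * dfall 1 ((j:ℝ)+1) r
          = -(if r = m then (m.factorial:ℝ) else 0) - (-1:ℝ)^(m+1) * dfall 1 (0:ℝ) r := by
        rw [← hV2, hV1]; ring
      have hP : ∑ j ∈ range (m+1), (-1:ℝ)^(m-j) * (m.choose j : ℝ) * dfall 1 ((j:ℝ)+1) r
          = (if r = m then (m.factorial:ℝ) else 0)
            + r * (if r - 1 = m then (m.factorial:ℝ) else 0) := by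
        have hterm : ∀ j ∈ range (m+1), (-1:ℝ)^(m-j) * (m.choose j : ℝ) * dfall 1 ((j:ℝ)+1) r
            = (-1:ℝ)^(m-j) * (m.choose j:ℝ) * dfall 1 (j:ℝ) r
              + r * ((-1:ℝ)^(m-j) * (m.choose j:ℝ) * dfall 1 (j:ℝ) (r-1)) := by
          intro j _; rw [dfall_shift_one]; ring
        rw [Finset.sum_congr rfl hterm, Finset.sum_add_distrib, ← Finset.mul_sum, ih r, ih (r-1)]
      rw [key, hP, hU]
      have hrw : (if r = m then (m.factorial:ℝ) else 0)
            + (r:ℝ) * (if r - 1 = m then (m.factorial:ℝ) else 0)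
            + (-(if r = m then (m.factorial:ℝ) else 0) - (-1:ℝ)^(m+1) * dfall 1 (0:ℝ) r)
            + (-1:ℝ)^(m+1) * dfall 1 (0:ℝ) r
          = (r:ℝ) * (if r - 1 = m then (m.factorial:ℝ) else 0) := by ring
      rw [hrw]
      cases r with
      | zero => simp
      | succ s =>
          simp only [Nat.succ_sub_one, Nat.add_right_cancel_iff]
          by_cases h : s = m
          · subst h
            simp [Nat.factorial_succ]
          · simp [h]

lemma vander (lam : ℝ) : ∀ (n : ℕ) (x y : ℝ), dfall lam (x+y) n
    = ∑ k ∈ range (n+1), (n.choose k : ℝ) * dfall lam x k * dfall lam y (n-k) := by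
  intro n
  induction n with
  | zero => intro x y; simp [dfall]
  | succ n ih =>
      intro x y
      have pascal : ∀ k : ℕ, ((n+1).choose k : ℝ)
          = (n.choose k : ℝ) + (if k = 0 then 0 else (n.choose (k-1) : ℝ)) := by
        intro k
        cases k with
        | zero => simp
        | succ j => rw [Nat.choose_succ_succ]; push_cast; simp; ring
      have hsplit : ∑ k ∈ range (n+1+1), ((n+1).choose k : ℝ) * dfall lam x k * dfall lam y (n+1-k)
          = (∑ k ∈ range (n+1+1), (n.choose k : ℝ) * dfall lam x k * dfall lam y (n+1-k))
            + ∑ k ∈ range (n+1+1),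
                (if k = 0 then 0 else (n.choose (k-1) : ℝ)) * dfall lam x k * dfall lam y (n+1-k) := by
        rw [← Finset.sum_add_distrib]
        apply Finset.sum_congr rfl
        intro k _
        rw [pascal k]; ring
      have hsum1 : ∑ k ∈ range (n+1+1), (n.choose k : ℝ) * dfall lam x k * dfall lam y (n+1-k)
          = ∑ k ∈ range (n+1), (n.choose k : ℝ) * dfall lam x k
              * (dfall lam y (n-k) * (y - ((n-k : ℕ) : ℝ) * lam)) := by
        rw [Finset.sum_range_succ]
        have hc : (n.choose (n+1) : ℝ) = 0 := by simp [Nat.choose_eq_zero_of_lt]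
        rw [hc]
        simp only [zero_mul, add_zero]
        apply Finset.sum_congr rfl
        intro k hk
        have h1 : n + 1 - k = (n - k) + 1 := by
          have := mem_range.mp hk; omega
        rw [h1, dfall_succ]
      have hsum2 : ∑ k ∈ range (n+1+1),
            (if k = 0 then 0 else (n.choose (k-1) : ℝ)) * dfall lam x k * dfall lam y (n+1-k)
          = ∑ k ∈ range (n+1), (n.choose k : ℝ) * (dfall lam x k * (x - (k:ℝ) * lam))
              * dfall lam y (n-k) := by
        rw [Finset.sum_range_succ']
        have hz : (if (0:ℕ) = 0 then (0:ℝ) else (n.choose (0-1) : ℝ)) * dfall lam x 0 * dfall lam y (n+1-0) = 0 := by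
          simp
        rw [hz, add_zero]
        apply Finset.sum_congr rfl
        intro k hk
        rw [if_neg (Nat.succ_ne_zero k), Nat.succ_sub_one, Nat.succ_sub_succ, dfall_succ]
      rw [dfall_succ, ih x y, hsplit, hsum1, hsum2, Finset.sum_mul, ← Finset.sum_add_distrib]
      apply Finset.sum_congr rfl
      intro k hk
      have hk' : k ≤ n := Nat.lt_succ_iff.mp (mem_range.mp hk)
      have hcast : ((n - k : ℕ) : ℝ) = (n : ℝ) - (k : ℝ) := by
        rw [Nat.cast_sub hk']
      rw [hcast]
      ring

section Main

variable (lam : ℝ) (S : ℕ → ℕ → ℝ)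
    (hS : ∀ (n : ℕ) (x : ℝ), dfall lam x n = ∑ k ∈ Finset.range (n + 1), S n k * dfall 1 x k)
    (F : ℕ → ℝ)
    (hF : ∀ n : ℕ, F n = ∑ k ∈ Finset.range (n + 1), S n k * (k.factorial : ℝ))

include hS in
lemma Sn_zero (n : ℕ) (hn : 1 ≤ n) : S n 0 = 0 := by
  obtain ⟨t, rfl⟩ : ∃ t, n = t + 1 := ⟨n - 1, by omega⟩
  have h := hS (t+1) 0
  rw [dfall_zero_x] at h
  have h2 : ∀ k ∈ range (t+1+1), S (t+1) k * dfall 1 (0:ℝ) k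
      = if (0:ℕ) = k then S (t+1) k else 0 := by
    intro k _
    cases k with
    | zero => simp [dfall]
    | succ s => rw [dfall_zero_x]; simp
  rw [Finset.sum_congr rfl h2, Finset.sum_ite_eq, if_pos (mem_range.mpr (by omega))] at h
  exact h.symm

include hS hF in
lemma F_zero : F 0 = 1 := by
  have h := hS 0 0
  simp [dfall] at h
  rw [hF 0]
  simp [← h]

include hS hF in
lemma hFrep (k n : ℕ) (hk : k ≤ n) :
    F k = ∑ m ∈ range (n+1), ∑ j ∈ range (m+1),
        (-1:ℝ)^(m-j) * (m.choose j : ℝ) * dfall lam (j:ℝ) k := by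
  have hm : ∀ m : ℕ, ∑ j ∈ range (m+1), (-1:ℝ)^(m-j) * (m.choose j:ℝ) * dfall lam (j:ℝ) k
      = ∑ r ∈ range (k+1), S k r * (if r = m then (m.factorial:ℝ) else 0) := by
    intro m
    calc ∑ j ∈ range (m+1), (-1:ℝ)^(m-j) * (m.choose j:ℝ) * dfall lam (j:ℝ) k
        = ∑ j ∈ range (m+1), ∑ r ∈ range (k+1),
            S k r * ((-1:ℝ)^(m-j) * (m.choose j:ℝ) * dfall 1 (j:ℝ) r) := by
          apply Finset.sum_congr rfl
          intro j _
          rw [hS k (j:ℝ), Finset.mul_sum]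
          apply Finset.sum_congr rfl
          intro r _
          ring
      _ = ∑ r ∈ range (k+1), ∑ j ∈ range (m+1),
            S k r * ((-1:ℝ)^(m-j) * (m.choose j:ℝ) * dfall 1 (j:ℝ) r) := Finset.sum_comm
      _ = ∑ r ∈ range (k+1), S k r * (if r = m then (m.factorial:ℝ) else 0) := by
          apply Finset.sum_congr rfl
          intro r _
          rw [← Finset.mul_sum, Bval m r]
  rw [Finset.sum_congr rfl (fun m _ => hm m), Finset.sum_comm, hF k]
  apply Finset.sum_congr rfl
  intro r hr
  rw [← Finset.mul_sum]
  congr 1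
  rw [Finset.sum_ite_eq, if_pos]
  exact mem_range.mpr (by have := mem_range.mp hr; omega)

include hS hF in
lemma lemG (n : ℕ) (hn : 1 ≤ n) :
    ∑ k ∈ range (n+1), (n.choose k : ℝ) * dfall lam 1 (n-k) * F k = 2 * F n := by
  have hinner : ∀ m : ℕ, ∑ j ∈ range (m+1), (-1:ℝ)^(m-j) * (m.choose j:ℝ)
        * (∑ k ∈ range (n+1), (n.choose k:ℝ) * dfall lam (j:ℝ) k * dfall lam 1 (n-k))
      = ∑ r ∈ range (n+1), (S n r * (if r = m then (m.factorial:ℝ) else 0)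
          + S n r * (r:ℝ) * (if r - 1 = m then (m.factorial:ℝ) else 0)) := by
    intro m
    calc ∑ j ∈ range (m+1), (-1:ℝ)^(m-j) * (m.choose j:ℝ)
            * (∑ k ∈ range (n+1), (n.choose k:ℝ) * dfall lam (j:ℝ) k * dfall lam 1 (n-k))
        = ∑ j ∈ range (m+1), ∑ r ∈ range (n+1),
            (S n r * ((-1:ℝ)^(m-j) * (m.choose j:ℝ) * dfall 1 (j:ℝ) r)
             + S n r * (r:ℝ) * ((-1:ℝ)^(m-j) * (m.choose j:ℝ) * dfall 1 (j:ℝ) (r-1))) := by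
          apply Finset.sum_congr rfl
          intro j _
          rw [← vander lam n (j:ℝ) 1, hS n ((j:ℝ)+1), Finset.mul_sum]
          apply Finset.sum_congr rfl
          intro r _
          rw [dfall_shift_one]
          ring
      _ = ∑ r ∈ range (n+1), ∑ j ∈ range (m+1),
            (S n r * ((-1:ℝ)^(m-j) * (m.choose j:ℝ) * dfall 1 (j:ℝ) r)
             + S n r * (r:ℝ) * ((-1:ℝ)^(m-j) * (m.choose j:ℝ) * dfall 1 (j:ℝ) (r-1))) :=
          Finset.sum_comm
      _ = ∑ r ∈ range (n+1), (S n r * (if r = m then (m.factorial:ℝ) else 0)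
          + S n r * (r:ℝ) * (if r - 1 = m then (m.factorial:ℝ) else 0)) := by
          apply Finset.sum_congr rfl
          intro r _
          rw [Finset.sum_add_distrib, ← Finset.mul_sum, ← Finset.mul_sum, Bval m r, Bval m (r-1)]
  calc ∑ k ∈ range (n+1), (n.choose k:ℝ) * dfall lam 1 (n-k) * F k
      = ∑ k ∈ range (n+1), ∑ m ∈ range (n+1), ∑ j ∈ range (m+1),
          (-1:ℝ)^(m-j) * (m.choose j:ℝ)
            * ((n.choose k:ℝ) * dfall lam (j:ℝ) k * dfall lam 1 (n-k)) := by
        apply Finset.sum_congr rfl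
        intro k hk
        rw [hFrep lam S hS F hF k n (Nat.lt_succ_iff.mp (mem_range.mp hk)), Finset.mul_sum]
        apply Finset.sum_congr rfl
        intro m _
        rw [Finset.mul_sum]
        apply Finset.sum_congr rfl
        intro j _
        ring
    _ = ∑ m ∈ range (n+1), ∑ k ∈ range (n+1), ∑ j ∈ range (m+1),
          (-1:ℝ)^(m-j) * (m.choose j:ℝ)
            * ((n.choose k:ℝ) * dfall lam (j:ℝ) k * dfall lam 1 (n-k)) := Finset.sum_comm
    _ = ∑ m ∈ range (n+1), ∑ j ∈ range (m+1), ∑ k ∈ range (n+1),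
          (-1:ℝ)^(m-j) * (m.choose j:ℝ)
            * ((n.choose k:ℝ) * dfall lam (j:ℝ) k * dfall lam 1 (n-k)) := by
        apply Finset.sum_congr rfl
        intro m _
        exact Finset.sum_comm
    _ = ∑ m ∈ range (n+1), ∑ j ∈ range (m+1), (-1:ℝ)^(m-j) * (m.choose j:ℝ)
            * (∑ k ∈ range (n+1), (n.choose k:ℝ) * dfall lam (j:ℝ) k * dfall lam 1 (n-k)) := by
        apply Finset.sum_congr rfl
        intro m _
        apply Finset.sum_congr rfl
        intro j _
        rw [Finset.mul_sum]
    _ = ∑ m ∈ range (n+1), ∑ r ∈ range (n+1), (S n r * (if r = m then (m.factorial:ℝ) else 0)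
          + S n r * (r:ℝ) * (if r - 1 = m then (m.factorial:ℝ) else 0)) := by
        apply Finset.sum_congr rfl
        intro m _
        exact hinner m
    _ = ∑ r ∈ range (n+1), ∑ m ∈ range (n+1), (S n r * (if r = m then (m.factorial:ℝ) else 0)
          + S n r * (r:ℝ) * (if r - 1 = m then (m.factorial:ℝ) else 0)) := Finset.sum_comm
    _ = ∑ r ∈ range (n+1), (S n r * (r.factorial:ℝ) + S n r * (r:ℝ) * ((r-1).factorial:ℝ)) := by
        apply Finset.sum_congr rfl
        intro r hr
        have hr' : r < n + 1 := mem_range.mp hr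
        rw [Finset.sum_add_distrib, ← Finset.mul_sum, ← Finset.mul_sum,
          Finset.sum_ite_eq, Finset.sum_ite_eq,
          if_pos hr, if_pos (mem_range.mpr (by omega))]
    _ = 2 * F n := by
        have hsplit : ∀ r ∈ range (n+1),
            S n r * (r.factorial:ℝ) + S n r * (r:ℝ) * ((r-1).factorial:ℝ)
            = 2 * (S n r * (r.factorial:ℝ)) - (if (0:ℕ) = r then S n 0 else 0) := by
          intro r _
          cases r with
          | zero => simp; ring
          | succ s =>
              rw [if_neg (by omega)]
              simp only [Nat.succ_sub_one]
              push_cast [Nat.factorial_succ]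
              ring
        rw [Finset.sum_congr rfl hsplit, Finset.sum_sub_distrib, ← Finset.mul_sum,
          Finset.sum_ite_eq, if_pos (mem_range.mpr (by omega)),
          Sn_zero lam S hS n hn, ← hF n]
        ring

end Main

lemma choose_mul_sub (N k : ℕ) : (N+1).choose k * (N+1-k) = (N+1) * N.choose k := by
  calc (N+1).choose k * (N+1-k) = (N+1).choose (k+1) * (k+1) :=
        (Nat.choose_succ_right_eq (N+1) k).symm
    _ = (N+1) * N.choose k := (Nat.add_one_mul_choose_eq N k).symm

lemma choose_cast (N k : ℕ) :
    ((N+1).choose k : ℝ) * ((N+1-k : ℕ) : ℝ) = ((N+1 : ℕ) : ℝ) * (N.choose k : ℝ) := by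
  rw [← Nat.cast_mul, ← Nat.cast_mul, choose_mul_sub]

lemma key2 (N k : ℕ) (hk : k ≤ N) :
    (N+1).choose k * (N+1-k).factorial = (N+1) * (N.choose k * (N-k).factorial) := by
  have h1 : N+1-k = (N-k)+1 := by omega
  rw [h1, Nat.factorial_succ, ← h1, ← Nat.mul_assoc, choose_mul_sub, Nat.mul_assoc]

noncomputable def Lfun (lam : ℝ) (F : ℕ → ℝ) (n : ℕ) : ℝ :=
  ∑ k ∈ range (n+1), (n.choose k : ℝ) * dfall lam 1 (n-k+1) * F k

noncomputable def Afun (lam : ℝ) (F : ℕ → ℝ) (n : ℕ) : ℝ :=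
  ∑ k ∈ range (n+1), (n.choose k : ℝ) * ((n-k).factorial : ℝ) * (-lam)^(n-k) * F k

section Main2

variable (lam : ℝ) (S : ℕ → ℕ → ℝ)
    (hS : ∀ (n : ℕ) (x : ℝ), dfall lam x n = ∑ k ∈ Finset.range (n + 1), S n k * dfall 1 x k)
    (F : ℕ → ℝ)
    (hF : ∀ n : ℕ, F n = ∑ k ∈ Finset.range (n + 1), S n k * (k.factorial : ℝ))

include hS hF in
lemma Lfun_succ (N : ℕ) :
    Lfun lam F (N+1) = 2 * F (N+1) - lam * ((N+1 : ℕ) : ℝ) * Lfun lam F N := by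
  unfold Lfun
  have hterm : ∀ k ∈ range (N+1+1), ((N+1).choose k:ℝ) * dfall lam 1 (N+1-k+1) * F k
      = ((N+1).choose k:ℝ) * dfall lam 1 (N+1-k) * F k
        - lam * (((N+1).choose k:ℝ) * ((N+1-k:ℕ):ℝ) * dfall lam 1 (N+1-k) * F k) := by
    intro k _
    rw [dfall_succ]
    ring
  rw [Finset.sum_congr rfl hterm, Finset.sum_sub_distrib, ← Finset.mul_sum]
  have hG : ∑ k ∈ range (N+1+1), ((N+1).choose k:ℝ) * dfall lam 1 (N+1-k) * F k
      = 2 * F (N+1) := lemG lam S hS F hF (N+1) (by omega)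
  have hT : ∑ k ∈ range (N+1+1),
        ((N+1).choose k:ℝ) * ((N+1-k:ℕ):ℝ) * dfall lam 1 (N+1-k) * F k
      = ((N+1:ℕ):ℝ) * ∑ k ∈ range (N+1), (N.choose k : ℝ) * dfall lam 1 (N-k+1) * F k := by
    rw [Finset.sum_range_succ]
    have hz : ((N+1).choose (N+1):ℝ) * ((N+1-(N+1):ℕ):ℝ)
        * dfall lam 1 (N+1-(N+1)) * F (N+1) = 0 := by simp
    rw [hz, add_zero, Finset.mul_sum]
    apply Finset.sum_congr rfl
    intro k hk
    have hk' : k ≤ N := Nat.lt_succ_iff.mp (mem_range.mp hk)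
    have h1 : N + 1 - k = (N - k) + 1 := by omega
    rw [choose_cast N k, h1]
    ring
  rw [hG, hT]
  ring

lemma Afun_succ (N : ℕ) :
    Afun lam F (N+1) = F (N+1) - lam * ((N+1 : ℕ) : ℝ) * Afun lam F N := by
  unfold Afun
  rw [Finset.sum_range_succ]
  have hlast : ((N+1).choose (N+1):ℝ) * (((N+1-(N+1)).factorial):ℝ)
      * (-lam)^(N+1-(N+1)) * F (N+1) = F (N+1) := by simp
  have hterm : ∀ k ∈ range (N+1),
      ((N+1).choose k:ℝ) * (((N+1-k).factorial):ℝ) * (-lam)^(N+1-k) * F k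
      = -(lam * ((N+1:ℕ):ℝ)
          * ((N.choose k:ℝ) * (((N-k).factorial):ℝ) * (-lam)^(N-k) * F k)) := by
    intro k hk
    have hk' : k ≤ N := Nat.lt_succ_iff.mp (mem_range.mp hk)
    have h1 : N + 1 - k = (N - k) + 1 := by omega
    calc ((N+1).choose k:ℝ) * (((N+1-k).factorial):ℝ) * (-lam)^(N+1-k) * F k
        = (((N+1).choose k * (N+1-k).factorial : ℕ):ℝ) * (-lam)^((N-k)+1) * F k := by
          rw [Nat.cast_mul, h1]
      _ = (((N+1) * (N.choose k * (N-k).factorial) : ℕ):ℝ) * ((-lam)^(N-k) * (-lam)) * F k := by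
          rw [key2 N k hk', pow_succ]
      _ = -(lam * ((N+1:ℕ):ℝ)
          * ((N.choose k:ℝ) * (((N-k).factorial):ℝ) * (-lam)^(N-k) * F k)) := by
          push_cast
          ring
  rw [Finset.sum_congr rfl hterm, Finset.sum_neg_distrib, ← Finset.mul_sum, hlast]
  ring

include hS hF in
lemma main_all : ∀ N : ℕ, Lfun lam F N = 2 * Afun lam F N - (-lam)^N * (N.factorial : ℝ) := by
  intro N
  induction N with
  | zero =>
      have h0 : F 0 = 1 := F_zero lam S hS F hF
      simp [Lfun, Afun, h0, dfall]
      norm_num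
  | succ N ih =>
      rw [Lfun_succ lam S hS F hF N, ih, Afun_succ lam F N]
      push_cast [Nat.factorial_succ, pow_succ]
      ring

end Main2

theorem stmt16 (lam : ℝ) (S : ℕ → ℕ → ℝ)
    (hS : ∀ (n : ℕ) (x : ℝ), dfall lam x n = ∑ k ∈ Finset.range (n + 1), S n k * dfall 1 x k)
    (F : ℕ → ℝ)
    (hF : ∀ n : ℕ, F n = ∑ k ∈ Finset.range (n + 1), S n k * (k.factorial : ℝ)) (n : ℕ) (hn : 1 ≤ n) :
    ∑ k ∈ Finset.range (n + 1), (n.choose k : ℝ) * dfall lam (1 - lam) (n - k) * F k =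
      2 * (∑ k ∈ Finset.range (n + 1),
          (n.choose k : ℝ) * (-1 : ℝ) ^ (n - k) * drise lam lam (n - k) * F k) +
        (-1 : ℝ) ^ (n - 1) * drise lam lam n := by
  obtain ⟨t, rfl⟩ : ∃ t, n = t + 1 := ⟨n - 1, by omega⟩
  have hL : ∑ k ∈ Finset.range (t + 1 + 1), ((t+1).choose k : ℝ) * dfall lam (1 - lam) (t + 1 - k) * F k
      = Lfun lam F (t+1) := by
    unfold Lfun
    apply Finset.sum_congr rfl
    intro k _
    rw [dfall_one_shift]
  have hA : Afun lam F (t+1)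
      = ∑ k ∈ Finset.range (t + 1 + 1),
          ((t+1).choose k : ℝ) * (-1 : ℝ) ^ (t + 1 - k) * drise lam lam (t + 1 - k) * F k := by
    unfold Afun
    apply Finset.sum_congr rfl
    intro k _
    rw [drise_eq, neg_pow]
    ring
  rw [hL, main_all lam S hS F hF (t+1), hA, drise_eq]
  have ht : t + 1 - 1 = t := rfl
  rw [ht, neg_pow, pow_succ]
  ring
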